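/- Let h : ℝⁿ → ℝ be continuously differentiable and f : ℝⁿ → ℝⁿ locally Lipschitz, and let C = {x : h(x) ≤ 0}. Suppose x : [0,T) → ℝⁿ is a solution of ẋ = f(x) with x(0) ∈ C, and suppose there exists α > 0 such that ∇h(x)ᵀ f(x) ≤ -α·h(x) for all x in a neighborhood of C. Then h(x(t)) ≤ 0 for all t ∈ [0,T), i.e., C is forward invariant. -/

import Mathlib

/-!
Along a solution, `g t = h (x t)` satisfies `g' ≤ -α g` wherever `x t` lies in the
neighbourhood `U` of `C`, in particular near every time at which `g ≤ 0`. On such a short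
interval Grönwall's inequality gives `g t ≤ g s · exp (-α (t - s)) ≤ 0`, so the set of times
with `g ≤ 0` is closed and open to the right in `[0, t]`; real induction then propagates
`g ≤ 0` from time `0`.
-/

open Set Filter Topology Real

theorem nonpos_of_deriv_right_le_neg_mul_self {g g' : ℝ → ℝ} {α a b : ℝ}
    (hg : ContinuousOn g (Icc a b)) (hg' : ∀ t ∈ Ico a b, HasDerivWithinAt g (g' t) (Ici t) t)
    (ha : g a ≤ 0) (bound : ∀ t ∈ Ico a b, g' t ≤ -α * g t) :
    ∀ t ∈ Icc a b, g t ≤ 0 := by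
  intro t ht
  have hgronwall := le_gronwallBound_of_liminf_deriv_right_le hg
    (fun s hs _ hr => (hg' s hs).liminf_right_slope_le hr) le_rfl
    (fun s hs => (bound s hs).trans_eq (add_zero _).symm) t ht
  rw [gronwallBound_ε0] at hgronwall
  exact hgronwall.trans (mul_nonpos_of_nonpos_of_nonneg ha (exp_pos _).le)

theorem nonpos_of_deriv_le_neg_mul_self_near_nonpos {g g' : ℝ → ℝ} {α a b : ℝ}
    (hg : ∀ t ∈ Ico a b, HasDerivAt g (g' t) t) (ha : g a ≤ 0)
    (bound : ∀ t ∈ Ico a b, g t ≤ 0 → ∀ᶠ τ in 𝓝[≥] t, g' τ ≤ -α * g τ) :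
    ∀ t ∈ Ico a b, g t ≤ 0 := by
  rintro t ⟨hat, htb⟩
  have hcont : ContinuousOn g (Icc a t) := fun τ hτ =>
    (hg τ ⟨hτ.1, hτ.2.trans_lt htb⟩).continuousAt.continuousWithinAt
  have hclosed : IsClosed ({τ | g τ ≤ 0} ∩ Icc a t) := by
    rw [inter_comm]
    exact hcont.preimage_isClosed_of_isClosed isClosed_Icc isClosed_Iic
  refine hclosed.Icc_subset_of_forall_mem_nhdsWithin ha ?_ ⟨hat, le_rfl⟩
  rintro s ⟨hs, has, hst⟩
  obtain ⟨u, hsu, hu⟩ :=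
    mem_nhdsGE_iff_exists_Ico_subset.mp (bound s ⟨has, hst.trans htb⟩ hs)
  refine mem_nhdsGT_iff_exists_Ioo_subset.mpr ⟨min u t, lt_min hsu hst, fun c hc => ?_⟩
  have hcu : c < u := hc.2.trans_le (min_le_left _ _)
  have hct : c ≤ t := hc.2.le.trans (min_le_right _ _)
  exact nonpos_of_deriv_right_le_neg_mul_self
    (hcont.mono (Icc_subset_Icc has hct))
    (fun τ hτ => (hg τ ⟨has.trans hτ.1, hτ.2.trans_le hct |>.trans htb⟩).hasDerivWithinAt)
    hs (fun τ hτ => hu ⟨hτ.1, hτ.2.trans hcu⟩) c ⟨hc.1.le, le_rfl⟩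

theorem cbf_forward_invariance_general {n : ℕ}
    (h : (Fin n → ℝ) → ℝ) (f : (Fin n → ℝ) → (Fin n → ℝ))
    (hh : ContDiff ℝ 1 h)
    (C : Set (Fin n → ℝ)) (hC : C = {x | h x ≤ 0})
    (T : ℝ) (x : ℝ → (Fin n → ℝ))
    (hsol : ∀ t ∈ Set.Ico (0 : ℝ) T, HasDerivAt x (f (x t)) t)
    (hx0 : x 0 ∈ C)
    (α : ℝ)
    (U : Set (Fin n → ℝ)) (hU : IsOpen U) (hCU : C ⊆ U)
    (hcbf : ∀ y ∈ U, fderiv ℝ h y (f y) ≤ -α * h y) :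
    ∀ t ∈ Set.Ico (0 : ℝ) T, h (x t) ≤ 0 := by
  subst hC
  have hhd : Differentiable ℝ h := hh.differentiable one_ne_zero
  refine nonpos_of_deriv_le_neg_mul_self_near_nonpos (g := fun t => h (x t)) (α := α)
    (fun t ht => (hhd (x t)).hasFDerivAt.comp_hasDerivAt t (hsol t ht)) hx0 ?_
  intro t ht hxt
  have hnearU : ∀ᶠ τ in 𝓝 t, x τ ∈ U :=
    (hsol t ht).continuousAt.eventually_mem (hU.mem_nhds (hCU hxt))
  exact nhdsWithin_le_nhds (hnearU.mono fun τ hτ => hcbf _ hτ)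

/-- Forward invariance via the CBF condition with linear class-K function:
if ∇h(x)ᵀf(x) ≤ -α h(x) on a neighborhood of C = {h ≤ 0}, then any solution of
ẋ = f(x) starting in C satisfies h(x(t)) ≤ 0 for all t ∈ [0,T). -/
theorem cbf_forward_invariance {n : ℕ}
    (h : (Fin n → ℝ) → ℝ) (f : (Fin n → ℝ) → (Fin n → ℝ))
    (hh : ContDiff ℝ 1 h) (hf : LocallyLipschitz f)
    (C : Set (Fin n → ℝ)) (hC : C = {x | h x ≤ 0})
    (T : ℝ) (x : ℝ → (Fin n → ℝ))
    (hsol : ∀ t ∈ Set.Ico (0 : ℝ) T, HasDerivAt x (f (x t)) t)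
    (hx0 : x 0 ∈ C)
    (α : ℝ) (hα : 0 < α)
    (U : Set (Fin n → ℝ)) (hU : IsOpen U) (hCU : C ⊆ U)
    (hcbf : ∀ y ∈ U, fderiv ℝ h y (f y) ≤ -α * h y) :
    ∀ t ∈ Set.Ico (0 : ℝ) T, h (x t) ≤ 0 :=
  cbf_forward_invariance_general h f hh C hC T x hsol hx0 α U hU hCU hcbf
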